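/- arXiv:1010.1703 — 3 statements merged into one kernel-verified Lean document; each statement's English description precedes it below -/
import Mathlib

section
/- Let A be a second-order elliptic operator Au = ∑ᵢⱼ aᵢⱼ∂ᵢⱼu + ∑ⱼ bⱼ∂ⱼu + cu with a(x) symmetric positive semidefinite, c ≤ 0, acting on C²-functions. If u : Ω → ℂ is C² on an open set Ω and x₀ ∈ Ω is such that |u(x₀)| ≥ |u(x)| for all x in a ball B around x₀ contained in Ω, and Au is continuous on B, then Re( conj(u(x₀)) · (Au)(x₀) ) ≤ 0. -/
/-!
Put `z₀ = u x₀` and `v = Re (conj z₀ · u) = ⟪z₀, u⟫_ℝ`. By Cauchy–Schwarz `v ≤ ‖z₀‖ ‖u‖ ≤ ‖z₀‖² = v x₀`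
near `x₀`, so `v` has a local maximum at `x₀`: its gradient vanishes and its Hessian is negative
semidefinite there. Since `w ↦ Re (conj z₀ · w)` is real linear and `a`, `b`, `c` are real,
`Re (conj z₀ · Au x₀) = ∑ aᵢⱼ ∂ᵢⱼv(x₀) + ∑ bⱼ ∂ⱼv(x₀) + c ‖z₀‖²`. The first-order term vanishes, the
last is `≤ 0` because `c ≤ 0`, and the trace of the positive semidefinite `a(x₀)` against the
negative semidefinite Hessian is `≤ 0` (write `a(x₀)` as a sum of rank-one matrices `wwᵀ`).
-/

open scoped ComplexConjugate
open Filter Topology Set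

theorem IsLocalMax.hasDerivAt_deriv_nonpos {g g' : ℝ → ℝ} {a C : ℝ} (h : IsLocalMax g a)
    (hg : ∀ᶠ t in 𝓝 a, HasDerivAt g (g' t) t) (hg' : HasDerivAt g' C a) : C ≤ 0 := by
  by_contra! hC
  -- `g' a = 0` and `g'' a > 0` make `g' > 0` just right of `a`, and then the mean value
  -- theorem gives `g b > g a` for some `b > a` close to `a`.
  have hg'a : g' a = 0 := h.hasDerivAt_eq_zero hg.self_of_nhds
  have hpos : ∀ᶠ t in 𝓝[>] a, 0 < g' t := by
    have hslope := (hasDerivAt_iff_tendsto_slope.mp hg').eventually (eventually_gt_nhds hC)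
    filter_upwards [nhdsGT_le_nhdsNE a hslope, self_mem_nhdsWithin] with t ht hat
    exact pos_of_slope_pos hat ht hg'a
  obtain ⟨b, hab : a < b, hb⟩ := mem_nhdsGT_iff_exists_Ioc_subset.mp
    (hpos.and (nhdsWithin_le_nhds (hg.and h)))
  have hcont : ContinuousOn g (Icc a b) := fun t ht =>
    (ht.1.eq_or_lt.elim (fun hat => hat ▸ hg.self_of_nhds)
      (fun hat => (hb ⟨hat, ht.2⟩).2.1)).continuousAt.continuousWithinAt
  obtain ⟨c, hc, hslope⟩ := exists_hasDerivAt_eq_slope g g' hab hcont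
    fun t ht => (hb (Ioo_subset_Ioc_self ht)).2.1
  have hgab : 0 < (g b - g a) / (b - a) := hslope ▸ (hb (Ioo_subset_Ioc_self hc)).1
  rw [div_pos_iff_of_pos_right (sub_pos.mpr hab), sub_pos] at hgab
  exact hgab.not_ge (hb (right_mem_Ioc.mpr hab)).2.2

theorem IsLocalMax.fderiv_fderiv_apply_self_nonpos {E : Type*} [NormedAddCommGroup E]
    [NormedSpace ℝ E] {f : E → ℝ} {x : E} (h : IsLocalMax f x)
    (hf : ∀ᶠ y in 𝓝 x, DifferentiableAt ℝ f y) (hf' : DifferentiableAt ℝ (fderiv ℝ f) x)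
    (v : E) : fderiv ℝ (fderiv ℝ f) x v v ≤ 0 := by
  set γ : ℝ → E := fun t => x + t • v
  have hγ : ∀ t, HasDerivAt γ v t := fun t => by
    simpa [γ] using ((hasDerivAt_id t).smul_const v).const_add x
  have hγ0 : γ 0 = x := by simp [γ]
  rw [← hγ0] at h hf hf' ⊢
  refine IsLocalMax.hasDerivAt_deriv_nonpos (g := f ∘ γ) (g' := fun t => fderiv ℝ f (γ t) v)
    (h.comp_continuous (hγ 0).continuousAt) ?_ ?_
  · filter_upwards [(hγ 0).continuousAt.eventually hf] with t ht
    exact ht.hasFDerivAt.comp_hasDerivAt t (hγ t)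
  · exact (ContinuousLinearMap.apply ℝ ℝ v).hasFDerivAt.comp_hasDerivAt 0
      (hf'.hasFDerivAt.comp_hasDerivAt 0 (hγ 0))

section SecondDerivative

variable {𝕜 E F G : Type*} [NontriviallyNormedField 𝕜] [NormedAddCommGroup E] [NormedSpace 𝕜 E]
  [NormedAddCommGroup F] [NormedSpace 𝕜 F] [NormedAddCommGroup G] [NormedSpace 𝕜 G]

theorem fderiv_apply_const_eq_fderiv_flip {c : E → F →L[𝕜] G} {x : E}
    (hc : DifferentiableAt 𝕜 c x) (v : F) :
    fderiv 𝕜 (fun y => c y v) x = (fderiv 𝕜 c x).flip v := by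
  simp [fderiv_clm_apply hc (differentiableAt_const v)]

theorem ContinuousLinearMap.fderiv_fderiv_comp_apply (L : F →L[𝕜] G) {u : E → F} {x : E}
    (hu : ContDiffAt 𝕜 2 u x) (ξ η : E) :
    fderiv 𝕜 (fderiv 𝕜 (L ∘ u)) x ξ η = L (fderiv 𝕜 (fderiv 𝕜 u) x ξ η) := by
  simpa [iteratedFDeriv_two_apply] using
    congrArg (· ![ξ, η]) (L.iteratedFDeriv_comp_left hu le_rfl (i := 2))

end SecondDerivative

theorem IsLocalMax.inner_of_norm {X F : Type*} [TopologicalSpace X] [NormedAddCommGroup F]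
    [InnerProductSpace ℝ F] {u : X → F} {x : X} (h : IsLocalMax (‖u ·‖) x) :
    IsLocalMax (fun y => inner ℝ (u x) (u y)) x :=
  h.mono fun y hy => calc
    inner ℝ (u x) (u y) ≤ ‖u x‖ * ‖u y‖ := real_inner_le_norm _ _
    _ ≤ ‖u x‖ * ‖u x‖ := by gcongr
    _ = inner ℝ (u x) (u x) := (real_inner_self_eq_norm_mul_norm _).symm

section MaxOfNorm

variable {E F : Type*} [NormedAddCommGroup E] [NormedSpace ℝ E] [NormedAddCommGroup F]
  [InnerProductSpace ℝ F] {u : E → F} {x : E}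

theorem IsLocalMax.inner_fderiv_eq_zero (h : IsLocalMax (‖u ·‖) x) (hu : DifferentiableAt ℝ u x)
    (η : E) : inner ℝ (u x) (fderiv ℝ u x η) = 0 := by
  simpa using congrArg (· η) <| h.inner_of_norm.hasFDerivAt_eq_zero
    ((innerSL ℝ (u x)).hasFDerivAt.comp x hu.hasFDerivAt)

theorem IsLocalMax.inner_fderiv_fderiv_apply_self_nonpos (h : IsLocalMax (‖u ·‖) x)
    (hu : ContDiffAt ℝ 2 u x) (ξ : E) :
    inner ℝ (u x) (fderiv ℝ (fderiv ℝ u) x ξ ξ) ≤ 0 := by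
  have hv : ContDiffAt ℝ 2 (innerSL ℝ (u x) ∘ u) x :=
    (innerSL ℝ (u x)).contDiff.contDiffAt.comp x hu
  rw [← innerSL_apply_apply, ← (innerSL ℝ (u x)).fderiv_fderiv_comp_apply hu]
  exact h.inner_of_norm.fderiv_fderiv_apply_self_nonpos
    ((hv.eventually (by simp)).mono fun y hy => hy.differentiableAt (by simp))
    ((hv.fderiv_right (m := 1) le_rfl).differentiableAt one_ne_zero) ξ

end MaxOfNorm

theorem Matrix.posSemidef_of_elliptic {ι : Type*} [Fintype ι] {A : Matrix ι ι ℝ}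
    (hA : ∀ i j, A i j = A j i) {Λ : ℝ} (hΛ : 0 ≤ Λ)
    (hell : ∀ ξ : EuclideanSpace ℝ ι, Λ * ‖ξ‖ ^ 2 ≤ ∑ i, ∑ j, A i j * ξ i * ξ j) :
    A.PosSemidef := by
  refine .of_dotProduct_mulVec_nonneg (Matrix.IsHermitian.ext fun i j => hA j i) fun ξ => ?_
  refine ((by positivity : 0 ≤ Λ * ‖WithLp.toLp 2 ξ‖ ^ 2).trans (hell _)).trans_eq ?_
  simp only [dotProduct, mulVec, star_trivial, Finset.mul_sum]
  exact Finset.sum_congr rfl fun i _ => Finset.sum_congr rfl fun j _ => by ring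

theorem Matrix.PosSemidef.sum_mul_apply_nonpos {ι E : Type*} [Fintype ι] [AddCommGroup E]
    [Module ℝ E] {A : Matrix ι ι ℝ} (hA : A.PosSemidef) {B : E →ₗ[ℝ] E →ₗ[ℝ] ℝ}
    (hB : ∀ v, B v v ≤ 0) (e : ι → E) : ∑ i, ∑ j, A i j * B (e i) (e j) ≤ 0 := by
  obtain ⟨m, w, rfl⟩ := Matrix.posSemidef_iff_eq_sum_vecMulVec.mp hA
  calc ∑ i, ∑ j, (∑ k, vecMulVec (w k) (star (w k))) i j * B (e i) (e j)
      = ∑ k, B (∑ i, w k i • e i) (∑ j, w k j • e j) := by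
        simp only [Matrix.sum_apply, vecMulVec_apply, star_trivial, map_sum, map_smul,
          LinearMap.coe_sum, LinearMap.coe_smul, Finset.sum_apply, Pi.smul_apply, smul_eq_mul,
          Finset.sum_mul, Finset.mul_sum]
        simp_rw [Finset.sum_comm (γ := Fin m)]
        rw [Finset.sum_comm]
        exact Finset.sum_congr rfl fun k _ => Finset.sum_congr rfl fun j _ =>
          Finset.sum_congr rfl fun i _ => by ring
    _ ≤ 0 := Finset.sum_nonpos fun k _ => hB _

theorem Complex.re_conj_mul_eq_inner (z w : ℂ) : (conj z * w).re = inner ℝ z w := by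
  rw [Complex.inner, mul_comm]

theorem complex_interior_maximum_inequality_general {n : ℕ}
    (Ω : Set (EuclideanSpace ℝ (Fin n)))
    (a : EuclideanSpace ℝ (Fin n) → Matrix (Fin n) (Fin n) ℝ)
    (b : EuclideanSpace ℝ (Fin n) → Fin n → ℝ)
    (c : EuclideanSpace ℝ (Fin n) → ℝ)
    (ha_symm : ∀ x i j, a x i j = a x j i)
    (Λ : ℝ) (hΛ : 0 < Λ)
    (hell : ∀ x ∈ Ω, ∀ ξ : EuclideanSpace ℝ (Fin n),
      Λ * ‖ξ‖ ^ 2 ≤ ∑ i, ∑ j, a x i j * ξ i * ξ j)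
    (hc : ∀ x, c x ≤ 0)
    (u : EuclideanSpace ℝ (Fin n) → ℂ) (hu : ContDiffOn ℝ 2 u Ω)
    (Au : EuclideanSpace ℝ (Fin n) → ℂ)
    (hAu : ∀ x ∈ Ω, Au x =
      (∑ i, ∑ j, (a x i j : ℂ) *
        fderiv ℝ (fun y => fderiv ℝ u y (EuclideanSpace.single j 1)) x
          (EuclideanSpace.single i 1)) +
      (∑ j, (b x j : ℂ) * fderiv ℝ u x (EuclideanSpace.single j 1)) +
      (c x : ℂ) * u x)
    (x₀ : EuclideanSpace ℝ (Fin n)) (r : ℝ) (hr : 0 < r)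
    (hball : Metric.ball x₀ r ⊆ Ω)
    (hmax : ∀ x ∈ Metric.ball x₀ r, ‖u x‖ ≤ ‖u x₀‖) :
    (conj (u x₀) * Au x₀).re ≤ 0 := by
  have hx₀ : x₀ ∈ Ω := hball (Metric.mem_ball_self hr)
  have hu₀ : ContDiffAt ℝ 2 u x₀ :=
    hu.contDiffAt (mem_of_superset (Metric.ball_mem_nhds x₀ hr) hball)
  have hmax₀ : IsLocalMax (‖u ·‖) x₀ := mem_of_superset (Metric.ball_mem_nhds x₀ hr) hmax
  have hDu : DifferentiableAt ℝ (fderiv ℝ u) x₀ :=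
    (hu₀.fderiv_right (m := 1) le_rfl).differentiableAt one_ne_zero
  have htrace := (Matrix.posSemidef_of_elliptic (ha_symm x₀) hΛ.le (hell x₀ hx₀)).sum_mul_apply_nonpos
    (B := (fderiv ℝ (fderiv ℝ u) x₀).toLinearMap₁₂.compr₂ (innerₗ ℂ (u x₀)))
    (hmax₀.inner_fderiv_fderiv_apply_self_nonpos hu₀) (EuclideanSpace.single · 1)
  simp only [LinearMap.compr₂_apply, ContinuousLinearMap.toLinearMap₁₂_apply_apply_apply,
    innerₗ_apply_apply] at htrace
  rw [hAu x₀ hx₀, Complex.re_conj_mul_eq_inner]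
  simp only [inner_add_right, inner_sum, ← Complex.real_smul, real_inner_smul_right,
    hmax₀.inner_fderiv_eq_zero (hu₀.differentiableAt two_ne_zero), mul_zero,
    Finset.sum_const_zero, add_zero, real_inner_self_eq_norm_sq,
    fderiv_apply_const_eq_fderiv_flip hDu, ContinuousLinearMap.flip_apply]
  exact add_nonpos htrace (mul_nonpos_of_nonpos_of_nonneg (hc x₀) (sq_nonneg _))

/-- Interior complex maximum principle inequality (Lemma 3.2): at an interior point
`x₀` where `|u|` is maximal over a ball, one has `Re(conj(u(x₀)) · (Au)(x₀)) ≤ 0`. -/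
theorem complex_interior_maximum_inequality {n : ℕ}
    (Ω : Set (EuclideanSpace ℝ (Fin n))) (hΩ : IsOpen Ω)
    (a : EuclideanSpace ℝ (Fin n) → Matrix (Fin n) (Fin n) ℝ)
    (b : EuclideanSpace ℝ (Fin n) → Fin n → ℝ)
    (c : EuclideanSpace ℝ (Fin n) → ℝ)
    (ha_cont : ∀ i j, ContinuousOn (fun x => a x i j) Ω)
    (ha_symm : ∀ x i j, a x i j = a x j i)
    (Λ : ℝ) (hΛ : 0 < Λ)
    (hell : ∀ x ∈ Ω, ∀ ξ : EuclideanSpace ℝ (Fin n),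
      Λ * ‖ξ‖ ^ 2 ≤ ∑ i, ∑ j, a x i j * ξ i * ξ j)
    (hb_bdd : ∃ C : ℝ, ∀ x j, |b x j| ≤ C) (hc_bdd : ∃ C : ℝ, ∀ x, |c x| ≤ C)
    (hc : ∀ x, c x ≤ 0)
    (u : EuclideanSpace ℝ (Fin n) → ℂ) (hu : ContDiffOn ℝ 2 u Ω)
    (Au : EuclideanSpace ℝ (Fin n) → ℂ)
    (hAu : ∀ x ∈ Ω, Au x =
      (∑ i, ∑ j, (a x i j : ℂ) *
        fderiv ℝ (fun y => fderiv ℝ u y (EuclideanSpace.single j 1)) x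
          (EuclideanSpace.single i 1)) +
      (∑ j, (b x j : ℂ) * fderiv ℝ u x (EuclideanSpace.single j 1)) +
      (c x : ℂ) * u x)
    (x₀ : EuclideanSpace ℝ (Fin n)) (r : ℝ) (hr : 0 < r)
    (hball : Metric.ball x₀ r ⊆ Ω)
    (hmax : ∀ x ∈ Metric.ball x₀ r, ‖u x‖ ≤ ‖u x₀‖)
    (hAu_cont : ContinuousOn Au (Metric.ball x₀ r)) :
    (conj (u x₀) * Au x₀).re ≤ 0 :=
  complex_interior_maximum_inequality_general Ω a b c ha_symm Λ hΛ hell hc u hu Au hAu x₀ r hr hball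
    hmax
end

section
/- (Ehrling's lemma) Let X, Y, Z be normed spaces with a compact linear embedding i : X → Y and an injective continuous linear embedding j : Y → Z. Then for every ε > 0 there exists C_ε ≥ 0 such that ‖i(u)‖_Y ≤ ε‖u‖_X + C_ε‖j(i(u))‖_Z for all u ∈ X. -/
/-!
The image `K` of the closed unit ball under the compact operator `i` has compact closure. On the
compact set `{y ∈ K | ε ≤ ‖y‖}` the map `j` does not vanish, so `‖y‖ / ‖j y‖` is bounded there by
some `C`; hence `‖y‖ ≤ ε + C ‖j y‖` on all of `K`, and scaling extends this to all of `X`.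
-/

open Metric Set

theorem IsCompact.exists_norm_le_add_mul_norm {Y Z : Type*}
    [NormedAddCommGroup Y] [NormedAddCommGroup Z] {K : Set Y} (hK : IsCompact K)
    {j : Y → Z} (hj : Continuous j) (hj0 : ∀ y ∈ K, j y = 0 → y = 0)
    {ε : ℝ} (hε : 0 < ε) :
    ∃ C ≥ (0 : ℝ), ∀ y ∈ K, ‖y‖ ≤ ε + C * ‖j y‖ := by
  set S := K ∩ {y | ε ≤ ‖y‖}
  have hS : IsCompact S := hK.inter_right (isClosed_le continuous_const continuous_norm)
  have hjS : ∀ y ∈ S, ‖j y‖ ≠ 0 := fun y hy hjy => by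
    have hεy : ε ≤ ‖y‖ := hy.2
    rw [hj0 y hy.1 (norm_eq_zero.1 hjy), norm_zero] at hεy
    linarith
  obtain ⟨C, hC⟩ := hS.bddAbove_image
    (continuous_norm.continuousOn.div hj.norm.continuousOn hjS)
  refine ⟨max C 0, le_max_right _ _, fun y hy => ?_⟩
  by_cases hεy : ε ≤ ‖y‖
  · have hquot : ‖y‖ / ‖j y‖ ≤ C := hC ⟨y, ⟨hy, hεy⟩, rfl⟩
    have hpos : 0 < ‖j y‖ := (norm_nonneg _).lt_of_ne' (hjS y ⟨hy, hεy⟩)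
    calc ‖y‖ ≤ C * ‖j y‖ := (div_le_iff₀ hpos).1 hquot
      _ ≤ max C 0 * ‖j y‖ := by gcongr; exact le_max_left _ _
      _ ≤ ε + max C 0 * ‖j y‖ := le_add_of_nonneg_left hε.le
  · exact (not_le.1 hεy).le.trans (le_add_of_nonneg_right (by positivity))

theorem ContinuousLinearMap.norm_le_mul_add_of_closedBall {X Y Z : Type*}
    [NormedAddCommGroup X] [NormedSpace ℝ X] [NormedAddCommGroup Y] [NormedSpace ℝ Y]
    [NormedAddCommGroup Z] [NormedSpace ℝ Z] (A : X →L[ℝ] Y) (B : X →L[ℝ] Z) {ε C : ℝ}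
    (h : ∀ u ∈ closedBall (0 : X) 1, ‖A u‖ ≤ ε + C * ‖B u‖) (u : X) :
    ‖A u‖ ≤ ε * ‖u‖ + C * ‖B u‖ := by
  rcases eq_or_ne u 0 with rfl | hu
  · simp
  have hnu : 0 < ‖u‖ := norm_pos_iff.2 hu
  have hunit : ‖u‖⁻¹ • u ∈ closedBall (0 : X) 1 := by
    simp [norm_smul, hnu.ne']
  have hscaled := h _ hunit
  simp only [map_smul, norm_smul, norm_inv, norm_norm] at hscaled
  calc ‖A u‖ = ‖u‖ * (‖u‖⁻¹ * ‖A u‖) := by field_simp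
    _ ≤ ‖u‖ * (ε + C * (‖u‖⁻¹ * ‖B u‖)) := by gcongr
    _ = ε * ‖u‖ + C * ‖B u‖ := by field_simp

theorem ehrling_lemma_general {X Y Z : Type*}
    [NormedAddCommGroup X] [NormedSpace ℝ X]
    [NormedAddCommGroup Y] [NormedSpace ℝ Y]
    [NormedAddCommGroup Z] [NormedSpace ℝ Z]
    (i : X →L[ℝ] Y) (hi : IsCompactOperator i)
    (j : Y →L[ℝ] Z) (hj : Function.Injective j) :
    ∀ ε > (0 : ℝ), ∃ Cε ≥ (0 : ℝ), ∀ u : X,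
      ‖i u‖ ≤ ε * ‖u‖ + Cε * ‖j (i u)‖ := by
  intro ε hε
  have hK : IsCompact (closure (i '' closedBall 0 1)) :=
    hi.isCompact_closure_image_closedBall (𝕜₁ := ℝ) 1
  obtain ⟨C, hC0, hC⟩ := hK.exists_norm_le_add_mul_norm j.continuous
    (fun y _ hy => hj (by rw [hy, map_zero])) hε
  exact ⟨C, hC0, i.norm_le_mul_add_of_closedBall (j.comp i)
    fun u hu => hC _ (subset_closure (mem_image_of_mem i hu))⟩

/-- Ehrling's lemma: given a compact embedding `i : X → Y` and an injective continuous
embedding `j : Y → Z`, for every `ε > 0` there is `C_ε ≥ 0` with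
`‖i u‖ ≤ ε ‖u‖ + C_ε ‖j (i u)‖` for all `u`. -/
theorem ehrling_lemma {X Y Z : Type*}
    [NormedAddCommGroup X] [NormedSpace ℝ X] [CompleteSpace X]
    [NormedAddCommGroup Y] [NormedSpace ℝ Y]
    [NormedAddCommGroup Z] [NormedSpace ℝ Z]
    (i : X →L[ℝ] Y) (hi : IsCompactOperator i)
    (j : Y →L[ℝ] Z) (hj : Function.Injective j) :
    ∀ ε > (0 : ℝ), ∃ Cε ≥ (0 : ℝ), ∀ u : X,
      ‖i u‖ ≤ ε * ‖u‖ + Cε * ‖j (i u)‖ :=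
  ehrling_lemma_general i hi j hj
end

section
/- Let A be a linear operator on C(closure Ω) (Ω bounded open in ℝⁿ) such that: (i) for every λ with Re λ > ω and every f, the equation λu − Au = f has a solution v on a larger region with ‖λv‖_∞ ≤ M‖f‖_∞; (ii) solutions w of λw − Aw = 0 on Ω that are continuous up to the boundary satisfy ‖w‖_{C(closure Ω)} = max_{∂Ω}|w|. Then any solution u ∈ C₀(Ω) of λu − Au = f satisfies ‖u‖_∞ ≤ (2M/|λ|)‖f‖_∞. -/
theorem sub_solves_homogeneous {X R : Type*} [CommRing R] (A : (X → R) →ₗ[R] (X → R))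
    {lam : R} {f u v : X → R} {x : X} (hv : lam * v x - A v x = f x)
    (hu : lam * u x - A u x = f x) : lam * (v - u) x - A (v - u) x = 0 := by
  rw [map_sub]
  simp only [Pi.sub_apply]
  linear_combination hv - hu

theorem norm_le_two_mul_of_sub_isMaxOn {X E : Type*} [SeminormedAddCommGroup E]
    {s : Set X} {u v : X → E} {z : X} {B : ℝ} (hz : z ∈ s) (huz : u z = 0)
    (hv : ∀ x ∈ s, ‖v x‖ ≤ B) (hmax : IsMaxOn (fun x => ‖(v - u) x‖) s z) :
    ∀ x ∈ s, ‖u x‖ ≤ 2 * B := by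
  intro x hx
  calc ‖u x‖ = ‖v x - (v - u) x‖ := by simp
    _ ≤ ‖v x‖ + ‖(v - u) x‖ := norm_sub_le _ _
    _ ≤ B + B :=
      add_le_add (hv x hx) ((isMaxOn_iff.1 hmax x hx).trans (by simpa [huz] using hv z hz))
    _ = 2 * B := by ring

theorem sectorial_estimate_transfer_general {n : ℕ}
    (Ω : Set (EuclideanSpace ℝ (Fin n)))
    (A : (EuclideanSpace ℝ (Fin n) → ℂ) →ₗ[ℂ] (EuclideanSpace ℝ (Fin n) → ℂ))
    (lam : ℂ) (hlam : 0 < lam.re)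
    (M F : ℝ)
    (f u v : EuclideanSpace ℝ (Fin n) → ℂ)
    -- (i) `v` solves the resolvent equation on the larger region, with sectorial bound
    (hv_cont : ContinuousOn v (closure Ω))
    (hv_sol : ∀ x ∈ closure Ω, lam * v x - A v x = f x)
    (hv_bdd : ∀ x ∈ closure Ω, ‖lam‖ * ‖v x‖ ≤ M * F)
    -- (ii) the maximum principle for solutions of `λ w - A w = 0`
    (hmaxprin : ∀ w : EuclideanSpace ℝ (Fin n) → ℂ,
      ContinuousOn w (closure Ω) → (∀ x ∈ Ω, lam * w x - A w x = 0) →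
      ∃ z ∈ frontier Ω, ∀ x ∈ closure Ω, ‖w x‖ ≤ ‖w z‖)
    -- `u ∈ C₀(Ω)` solves `λ u - A u = f` on `Ω`
    (hu_cont : ContinuousOn u (closure Ω))
    (hu_bd : ∀ x ∈ frontier Ω, u x = 0)
    (hu_sol : ∀ x ∈ Ω, lam * u x - A u x = f x) :
    ∀ x ∈ closure Ω, ‖u x‖ ≤ (2 * M / ‖lam‖) * F := by
  have hlam_pos : 0 < ‖lam‖ := norm_pos_iff.2 fun h => by simp [h] at hlam
  obtain ⟨z, hz, hmax⟩ := hmaxprin (v - u) (hv_cont.sub hu_cont) fun x hx =>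
    sub_solves_homogeneous A (hv_sol x (subset_closure hx)) (hu_sol x hx)
  have hv : ∀ x ∈ closure Ω, ‖v x‖ ≤ M * F / ‖lam‖ := fun x hx =>
    (le_div_iff₀' hlam_pos).2 (hv_bdd x hx)
  intro x hx
  calc ‖u x‖ ≤ 2 * (M * F / ‖lam‖) :=
        norm_le_two_mul_of_sub_isMaxOn (frontier_subset_closure hz) (hu_bd z hz) hv hmax x hx
    _ = (2 * M / ‖lam‖) * F := by ring

/-- The abstract mechanism of Theorem 3.1: a solution `v` of the resolvent equation on a
larger region with sectorial bound, together with the boundary maximum principle for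
`λ`-harmonic functions, yields the estimate `‖u‖_∞ ≤ (2M/|λ|) ‖f‖_∞` for solutions
`u ∈ C₀(Ω)` of `λ u - A u = f`. -/
theorem sectorial_estimate_transfer {n : ℕ}
    (Ω : Set (EuclideanSpace ℝ (Fin n))) (hΩo : IsOpen Ω)
    (hΩb : Bornology.IsBounded Ω)
    (A : (EuclideanSpace ℝ (Fin n) → ℂ) →ₗ[ℂ] (EuclideanSpace ℝ (Fin n) → ℂ))
    (lam : ℂ) (hlam : 0 < lam.re)
    (M F : ℝ) (hM : 0 < M) (hF : 0 ≤ F)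
    (f u v : EuclideanSpace ℝ (Fin n) → ℂ)
    (hf_bdd : ∀ x ∈ closure Ω, ‖f x‖ ≤ F)
    -- (i) `v` solves the resolvent equation on the larger region, with sectorial bound
    (hv_cont : ContinuousOn v (closure Ω))
    (hv_sol : ∀ x ∈ closure Ω, lam * v x - A v x = f x)
    (hv_bdd : ∀ x ∈ closure Ω, ‖lam‖ * ‖v x‖ ≤ M * F)
    -- (ii) the maximum principle for solutions of `λ w - A w = 0`
    (hmaxprin : ∀ w : EuclideanSpace ℝ (Fin n) → ℂ,
      ContinuousOn w (closure Ω) → (∀ x ∈ Ω, lam * w x - A w x = 0) →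
      ∃ z ∈ frontier Ω, ∀ x ∈ closure Ω, ‖w x‖ ≤ ‖w z‖)
    -- `u ∈ C₀(Ω)` solves `λ u - A u = f` on `Ω`
    (hu_cont : ContinuousOn u (closure Ω))
    (hu_bd : ∀ x ∈ frontier Ω, u x = 0)
    (hu_sol : ∀ x ∈ Ω, lam * u x - A u x = f x)
    (hAw : A (v - u) = A v - A u) :
    ∀ x ∈ closure Ω, ‖u x‖ ≤ (2 * M / ‖lam‖) * F :=
  sectorial_estimate_transfer_general Ω A lam hlam M F f u v hv_cont hv_sol hv_bdd hmaxprin hu_cont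
    hu_bd hu_sol
end
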